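/- Let U be a type with decidable equality, let p be a real with 0 < p ≤ 1, let η ∈ (0,1), and let Z ≥ 0 be a real. For all lists A, B, C with entries in U such that B is a suffix of A: if (1 − η)·(‖A‖_p^p + Z) ≤ ‖B‖_p^p + Z, then (1 − η)·(‖A ++ C‖_p^p + Z) ≤ ‖B ++ C‖_p^p + Z, where ++ denotes list concatenation. -/

import Mathlib

/-- The `ℓ_p` frequency moment of a list: the sum over distinct elements `a`
of the `p`-th (real) power of the number of occurrences of `a`. -/
noncomputable def lpMoment {U : Type*} [DecidableEq U] (p : ℝ) (S : List U) : ℝ :=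
  ∑ a ∈ S.toFinset, (S.count a : ℝ) ^ p

/-- Submodularity of `x ↦ x ^ p` for `0 < p ≤ 1`. -/
lemma key_rpow_sub (p : ℝ) (hp0 : 0 < p) (hp1 : p ≤ 1) {x y c : ℝ}
    (hx : 0 ≤ x) (hxy : x ≤ y) (hc : 0 ≤ c) :
    (y + c) ^ p - y ^ p ≤ (x + c) ^ p - x ^ p := by
  have hcont : Continuous fun t : ℝ => (t + c) ^ p - t ^ p :=
    ((continuous_add_right c).rpow_const (fun t => Or.inr hp0.le)).sub
      (continuous_id.rpow_const (fun t => Or.inr hp0.le))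
  have hderiv : ∀ t : ℝ, 0 < t →
      HasDerivAt (fun t : ℝ => (t + c) ^ p - t ^ p)
        (p * (t + c) ^ (p - 1) - p * t ^ (p - 1)) t := by
    intro t ht
    have h1 : HasDerivAt (fun t : ℝ => (t + c) ^ p) (p * (t + c) ^ (p - 1)) t := by
      have := (Real.hasDerivAt_rpow_const (x := t + c) (p := p)
        (Or.inl (by positivity))).comp t ((hasDerivAt_id t).add_const c)
      simpa [Function.comp_def] using this
    exact h1.sub (Real.hasDerivAt_rpow_const (Or.inl ht.ne'))
  have hanti : AntitoneOn (fun t : ℝ => (t + c) ^ p - t ^ p) (Set.Ici 0) := by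
    apply antitoneOn_of_deriv_nonpos (convex_Ici 0) hcont.continuousOn
    · intro t ht
      rw [interior_Ici] at ht
      exact (hderiv t ht).differentiableAt.differentiableWithinAt
    · intro t ht
      rw [interior_Ici] at ht
      rw [(hderiv t ht).deriv]
      have : (t + c) ^ (p - 1) ≤ t ^ (p - 1) :=
        Real.rpow_le_rpow_of_nonpos ht (by linarith) (by linarith)
      nlinarith
  exact hanti hx (hx.trans hxy) hxy

/-- `lpMoment` as a sum over any finset containing the support. -/
lemma lpMoment_eq_sum {U : Type*} [DecidableEq U] (p : ℝ) (hp0 : 0 < p)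
    (S : List U) (T : Finset U) (hST : S.toFinset ⊆ T) :
    lpMoment p S = ∑ a ∈ T, (S.count a : ℝ) ^ p := by
  refine Finset.sum_subset hST fun a _ ha => ?_
  have : S.count a = 0 := List.count_eq_zero.mpr (by simpa using ha)
  rw [this]
  simp [Real.zero_rpow hp0.ne']

/-- smoothness of the `ℓ_p` frequency moment (shifted by `Z ≥ 0`)
for `0 < p ≤ 1`, with smoothness parameters `(η, η)`. -/
theorem stmt_3 {U : Type*} [DecidableEq U] (p η Z : ℝ) (hp0 : 0 < p) (hp1 : p ≤ 1)
    (hη : η ∈ Set.Ioo (0 : ℝ) 1) (hZ : 0 ≤ Z)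
    (A B C : List U) (hBA : B <:+ A)
    (h : (1 - η) * (lpMoment p A + Z) ≤ lpMoment p B + Z) :
    (1 - η) * (lpMoment p (A ++ C) + Z) ≤ lpMoment p (B ++ C) + Z := by
  obtain ⟨hη0, hη1⟩ := hη
  set T : Finset U := (A ++ C).toFinset with hT
  have hBsub : B.toFinset ⊆ A.toFinset := fun a ha => by
    simp only [List.mem_toFinset] at ha ⊢
    exact hBA.sublist.mem ha
  have hAT : A.toFinset ⊆ T := by simp [hT]
  have hCT : C.toFinset ⊆ T := by
    intro a ha; simp only [hT, List.toFinset_append, Finset.mem_union]; exact Or.inr ha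
  have hBT : B.toFinset ⊆ T := hBsub.trans hAT
  have hBCT : (B ++ C).toFinset ⊆ T := by
    rw [List.toFinset_append]; exact Finset.union_subset hBT hCT
  have hACT : (A ++ C).toFinset ⊆ T := le_refl T
  have eA := lpMoment_eq_sum p hp0 A T hAT
  have eB := lpMoment_eq_sum p hp0 B T hBT
  have eAC := lpMoment_eq_sum p hp0 (A ++ C) T hACT
  have eBC := lpMoment_eq_sum p hp0 (B ++ C) T hBCT
  set D : ℝ := ∑ a ∈ T, (((A.count a + C.count a : ℕ) : ℝ) ^ p - ((A.count a : ℕ) : ℝ) ^ p)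
    with hD
  set E : ℝ := ∑ a ∈ T, (((B.count a + C.count a : ℕ) : ℝ) ^ p - ((B.count a : ℕ) : ℝ) ^ p)
    with hE
  have hACD : lpMoment p (A ++ C) = lpMoment p A + D := by
    rw [eAC, eA, hD, Finset.sum_sub_distrib]
    simp [List.count_append]
  have hBCE : lpMoment p (B ++ C) = lpMoment p B + E := by
    rw [eBC, eB, hE, Finset.sum_sub_distrib]
    simp [List.count_append]
  have hD0 : 0 ≤ D := by
    refine Finset.sum_nonneg fun a _ => ?_
    have : ((A.count a : ℕ) : ℝ) ^ p ≤ ((A.count a + C.count a : ℕ) : ℝ) ^ p := by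
      apply Real.rpow_le_rpow (by positivity) _ hp0.le
      exact_mod_cast Nat.le_add_right _ _
    linarith
  have hDE : D ≤ E := by
    refine Finset.sum_le_sum fun a _ => ?_
    have hcnt : B.count a ≤ A.count a := hBA.sublist.count_le a
    have := key_rpow_sub p hp0 hp1 (x := (B.count a : ℝ)) (y := (A.count a : ℝ))
      (c := (C.count a : ℝ)) (by positivity) (by exact_mod_cast hcnt) (by positivity)
    push_cast
    push_cast at this
    linarith
  rw [hACD, hBCE]
  nlinarith [mul_nonneg hη0.le hD0]
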